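/- arXiv:2110.11063 — 4 statements merged into one kernel-verified Lean document; each statement's English description precedes it below -/
import Mathlib

section
/- Let Ω ⊂ ℝ^n be bounded open and Ψ ∈ B_0(H^s, H^{-s}). Then the bilinear form B_Ψ(v,w) = ⟨(−Δ)^{s/2}v, (−Δ)^{s/2}w⟩ + ⟨Ψv, w⟩ is coercive on H̃^s(Ω): there exist constants c_0 > 0 and c_1 > 0 such that B_Ψ(v,v) ≥ c_0‖v‖²_{H^s} − c_1‖v‖²_{L^2} for all v ∈ H̃^s(Ω). -/
/-!
Split `Ψ = Ψ₁ + Ψ₂` with `‖Ψ₂‖ < c_Ω / 2`. The part `Ψ₁` acts through `L²`, so it costs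
only `‖Ψ₁‖ ‖v‖²_{L²}`; the small part costs at most `c_Ω/2 ‖v‖²_{Hˢ}`, which the fractional Poincaré
inequality `‖(−Δ)^{s/2} v‖² ≥ c_Ω ‖v‖²_{Hˢ} − ‖v‖²_{L²}` absorbs.
-/

lemma abs_form_apply_self_le {E F : Type*} [SeminormedAddCommGroup E] [NormedSpace ℝ E]
    [SeminormedAddCommGroup F] [NormedSpace ℝ F] (B : F → E → ℝ)
    (hB : ∀ w v, |B w v| ≤ ‖w‖ * ‖v‖) (T : E →L[ℝ] F) (v : E) :
    |B (T v) v| ≤ ‖T‖ * ‖v‖ ^ 2 :=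
  calc |B (T v) v| ≤ ‖T v‖ * ‖v‖ := hB _ _
    _ ≤ ‖T‖ * ‖v‖ * ‖v‖ := by gcongr; exact T.le_opNorm v
    _ = ‖T‖ * ‖v‖ ^ 2 := by ring

theorem stmt_6_general
    {Hs L2 Hms : Type*}
    [NormedAddCommGroup Hs] [NormedSpace ℝ Hs]
    [NormedAddCommGroup L2] [InnerProductSpace ℝ L2]
    [NormedAddCommGroup Hms] [NormedSpace ℝ Hms]
    -- Λ models (−Δ)^{s/2} : Hˢ → L²; i is the inclusion Hˢ ⊂ L²
    (Λ : Hs →ₗ[ℝ] L2) (i : Hs →ₗ[ℝ] L2)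
    (pair : Hms →ₗ[ℝ] Hs →ₗ[ℝ] ℝ)
    (hpair : ∀ (w : Hms) (v : Hs), |pair w v| ≤ ‖w‖ * ‖v‖)
    -- H̃ˢ(Ω)
    (tildeΩ : Set Hs)
    -- fractional Poincaré inequality
    (cΩ : ℝ) (hcΩ : 0 < cΩ)
    (hPoincare : ∀ v ∈ tildeΩ, cΩ * ‖v‖ ^ 2 ≤ ‖Λ v‖ ^ 2 + ‖i v‖ ^ 2)
    (Ψ : Hs →L[ℝ] Hms)
    -- Ψ ∈ B₀(Hˢ,H⁻ˢ): for every ε > 0, Ψ = Ψ₁ + Ψ₂ with Ψ₁ ∈ B(L²,L²), ‖Ψ₂‖ < ε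
    (hB0 : ∀ ε > (0:ℝ), ∃ (Ψ₁ : L2 →L[ℝ] L2) (Ψ₂ : Hs →L[ℝ] Hms),
      (∀ v w : Hs, pair (Ψ v) w = (inner ℝ (Ψ₁ (i v)) (i w) : ℝ) + pair (Ψ₂ v) w) ∧
        ‖Ψ₂‖ < ε) :
    ∃ c₀ > (0:ℝ), ∃ c₁ > (0:ℝ), ∀ v ∈ tildeΩ,
      c₀ * ‖v‖ ^ 2 - c₁ * ‖i v‖ ^ 2 ≤ (inner ℝ (Λ v) (Λ v) : ℝ) + pair (Ψ v) v := by
  obtain ⟨Ψ₁, Ψ₂, hsplit, hΨ₂⟩ := hB0 (cΩ / 2) (half_pos hcΩ)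
  refine ⟨cΩ / 2, half_pos hcΩ, 1 + ‖Ψ₁‖, by positivity, fun v hv => ?_⟩
  have hΨ₁v : |(inner ℝ (Ψ₁ (i v)) (i v) : ℝ)| ≤ ‖Ψ₁‖ * ‖i v‖ ^ 2 :=
    abs_form_apply_self_le (fun w u => inner ℝ w u) abs_real_inner_le_norm Ψ₁ (i v)
  have hΨ₂v : |pair (Ψ₂ v) v| ≤ cΩ / 2 * ‖v‖ ^ 2 :=
    (abs_form_apply_self_le (fun w u => pair w u) hpair Ψ₂ v).trans (by gcongr)
  rw [hsplit v v, real_inner_self_eq_norm_sq]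
  linarith [hPoincare v hv, neg_abs_le (inner ℝ (Ψ₁ (i v)) (i v) : ℝ),
    neg_abs_le (pair (Ψ₂ v) v)]

/-- For `Ψ ∈ B₀(Hˢ,H⁻ˢ)` the bilinear form `B_Ψ` is coercive on `H̃ˢ(Ω)`:
`B_Ψ(v,v) ≥ c₀‖v‖²_{Hˢ} − c₁‖v‖²_{L²}`. -/
theorem stmt_6 (n : ℕ) (s : ℝ) (hs : s ∈ Set.Ioo (0:ℝ) 1)
    {Hs L2 Hms : Type*}
    [NormedAddCommGroup Hs] [NormedSpace ℝ Hs]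
    [NormedAddCommGroup L2] [InnerProductSpace ℝ L2]
    [NormedAddCommGroup Hms] [NormedSpace ℝ Hms]
    (Ω : Set (EuclideanSpace ℝ (Fin n))) (hΩo : IsOpen Ω) (hΩb : Bornology.IsBounded Ω)
    -- Λ models (−Δ)^{s/2} : Hˢ → L²; i is the inclusion Hˢ ⊂ L²
    (Λ : Hs →ₗ[ℝ] L2) (i : Hs →ₗ[ℝ] L2)
    (pair : Hms →ₗ[ℝ] Hs →ₗ[ℝ] ℝ)
    (hpair : ∀ (w : Hms) (v : Hs), |pair w v| ≤ ‖w‖ * ‖v‖)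
    -- H̃ˢ(Ω)
    (tildeΩ : Set Hs)
    -- fractional Poincaré inequality
    (cΩ : ℝ) (hcΩ : 0 < cΩ)
    (hPoincare : ∀ v ∈ tildeΩ, cΩ * ‖v‖ ^ 2 ≤ ‖Λ v‖ ^ 2 + ‖i v‖ ^ 2)
    (Ψ : Hs →L[ℝ] Hms)
    -- Ψ ∈ B₀(Hˢ,H⁻ˢ): for every ε > 0, Ψ = Ψ₁ + Ψ₂ with Ψ₁ ∈ B(L²,L²), ‖Ψ₂‖ < ε
    (hB0 : ∀ ε > (0:ℝ), ∃ (Ψ₁ : L2 →L[ℝ] L2) (Ψ₂ : Hs →L[ℝ] Hms),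
      (∀ v w : Hs, pair (Ψ v) w = (inner ℝ (Ψ₁ (i v)) (i w) : ℝ) + pair (Ψ₂ v) w) ∧
        ‖Ψ₂‖ < ε) :
    ∃ c₀ > (0:ℝ), ∃ c₁ > (0:ℝ), ∀ v ∈ tildeΩ,
      c₀ * ‖v‖ ^ 2 - c₁ * ‖i v‖ ^ 2 ≤ (inner ℝ (Λ v) (Λ v) : ℝ) + pair (Ψ v) v :=
  stmt_6_general Λ i pair hpair tildeΩ cΩ hcΩ hPoincare Ψ hB0
end

section
/- Let Ω, W ⊂ ℝ^n be non-empty open sets, s ∈ (0,1), and let Ψ ∈ B(H^s, H^{-s}) have finite propagation p(Ψ). Suppose u ∈ H̃^s(Ω) satisfies ((−Δ)^s u + Ψu)|_W = 0 and W ∩ N(Ω, p(Ψ))_e ≠ ∅. Then u ≡ 0. -/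
/- The set `W ∩ N(Ω, p)ₑ` is open, and `u` vanishes on it because `supp u ⊆ closure Ω`;
finite propagation puts `supp (Ψ u)` inside `N(supp u, p) ⊆ N(Ω, p)`, so `(−Δ)ˢ u` vanishes
there as well, and the unique continuation property of `(−Δ)ˢ` gives `u = 0`. -/

open Metric

section Thickening

variable {α : Type*} [PseudoMetricSpace α]

theorem Metric.self_subset_setOf_infDist_le {s : Set α} {p : ℝ} (hp : 0 ≤ p) :
    s ⊆ {x | infDist x s ≤ p} := fun _ hx => (infDist_zero_of_mem hx).trans_le hp

theorem Metric.setOf_infDist_le_mono {s t : Set α} (hts : t ⊆ closure s) (ht : t.Nonempty)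
    (p : ℝ) : {x | infDist x t ≤ p} ⊆ {x | infDist x s ≤ p} := fun x hx =>
  calc infDist x s = infDist x (closure s) := infDist_closure.symm
    _ ≤ infDist x t := infDist_le_infDist_of_subset hts ht
    _ ≤ p := hx

end Thickening

theorem stmt_7_general (n : ℕ)
    {Hs Hms : Type*}
    [NormedAddCommGroup Hs] [NormedSpace ℝ Hs]
    [NormedAddCommGroup Hms] [NormedSpace ℝ Hms]
    (Ω W : Set (EuclideanSpace ℝ (Fin n)))
    (hWo : IsOpen W)
    (suppS : Hs → Set (EuclideanSpace ℝ (Fin n)))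
    (suppM : Hms → Set (EuclideanSpace ℝ (Fin n)))
    (hsupp0 : ∀ v : Hs, suppS v = ∅ → v = 0)
    (hsuppAdd : ∀ a b : Hms, suppM a ⊆ suppM (a + b) ∪ suppM b)
    -- (−Δ)ˢ : Hˢ → H⁻ˢ
    (fracLap : Hs →ₗ[ℝ] Hms)
    -- UCP for the fractional Laplacian: if u and (−Δ)ˢu both vanish on an open
    -- nonempty set V, then u ≡ 0
    (hUCP : ∀ (v : Hs) (V : Set (EuclideanSpace ℝ (Fin n))), IsOpen V → V.Nonempty →
      suppS v ⊆ Vᶜ → suppM (fracLap v) ⊆ Vᶜ → v = 0)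
    (Ψ : Hs →L[ℝ] Hms) (p : ℝ) (hp : 0 ≤ p)
    -- finite propagation p(Ψ) = p
    (hprop : ∀ u : Hs, suppM (Ψ u) ⊆ {x | Metric.infDist x (suppS u) ≤ p})
    (u : Hs) (hu : suppS u ⊆ closure Ω)
    -- ((−Δ)ˢ u + Ψ u)|_W = 0
    (hsol : suppM (fracLap u + Ψ u) ⊆ Wᶜ)
    -- W ∩ N(Ω, p(Ψ))_e ≠ ∅
    (hgeom : (W ∩ {x | Metric.infDist x Ω ≤ p}ᶜ).Nonempty) :
    u = 0 := by
  -- `infDist x ∅ = 0`, so finite propagation gives no information when `supp u = ∅`.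
  rcases (suppS u).eq_empty_or_nonempty with hempty | hne
  · exact hsupp0 u hempty
  set N := {x | infDist x Ω ≤ p}
  have hNu : {x | infDist x (suppS u) ≤ p} ⊆ N := setOf_infDist_le_mono hu hne p
  have hVc : (W ∩ Nᶜ)ᶜ = Wᶜ ∪ N := by rw [Set.compl_inter, compl_compl]
  have hVo : IsOpen (W ∩ Nᶜ) :=
    hWo.inter (isClosed_le (continuous_infDist_pt Ω) continuous_const).isOpen_compl
  refine hUCP u _ hVo hgeom ?_ ?_ <;> rw [hVc]
  · exact (self_subset_setOf_infDist_le hp).trans (hNu.trans Set.subset_union_right)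
  · exact (hsuppAdd _ (Ψ u)).trans (Set.union_subset_union hsol ((hprop u).trans hNu))

/-- UCP for `(−Δ)ˢ + Ψ` with `Ψ` of finite propagation: if `u ∈ H̃ˢ(Ω)`,
`((−Δ)ˢu + Ψu)|_W = 0` and `W ∩ N(Ω, p(Ψ))_e ≠ ∅`, then `u ≡ 0`. -/
theorem stmt_7 (n : ℕ) (s : ℝ) (hs : s ∈ Set.Ioo (0:ℝ) 1)
    {Hs Hms : Type*}
    [NormedAddCommGroup Hs] [NormedSpace ℝ Hs]
    [NormedAddCommGroup Hms] [NormedSpace ℝ Hms]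
    (Ω W : Set (EuclideanSpace ℝ (Fin n)))
    (hΩo : IsOpen Ω) (hΩne : Ω.Nonempty) (hWo : IsOpen W) (hWne : W.Nonempty)
    (suppS : Hs → Set (EuclideanSpace ℝ (Fin n)))
    (suppM : Hms → Set (EuclideanSpace ℝ (Fin n)))
    (hsupp0 : ∀ v : Hs, suppS v = ∅ → v = 0)
    (hsuppAdd : ∀ a b : Hms, suppM a ⊆ suppM (a + b) ∪ suppM b)
    -- (−Δ)ˢ : Hˢ → H⁻ˢ
    (fracLap : Hs →ₗ[ℝ] Hms)
    -- UCP for the fractional Laplacian: if u and (−Δ)ˢu both vanish on an open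
    -- nonempty set V, then u ≡ 0
    (hUCP : ∀ (v : Hs) (V : Set (EuclideanSpace ℝ (Fin n))), IsOpen V → V.Nonempty →
      suppS v ⊆ Vᶜ → suppM (fracLap v) ⊆ Vᶜ → v = 0)
    (Ψ : Hs →L[ℝ] Hms) (p : ℝ) (hp : 0 ≤ p)
    -- finite propagation p(Ψ) = p
    (hprop : ∀ u : Hs, suppM (Ψ u) ⊆ {x | Metric.infDist x (suppS u) ≤ p})
    (u : Hs) (hu : suppS u ⊆ closure Ω)
    -- ((−Δ)ˢ u + Ψ u)|_W = 0
    (hsol : suppM (fracLap u + Ψ u) ⊆ Wᶜ)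
    -- W ∩ N(Ω, p(Ψ))_e ≠ ∅
    (hgeom : (W ∩ {x | Metric.infDist x Ω ≤ p}ᶜ).Nonempty) :
    u = 0 :=
  stmt_7_general n Ω W hWo suppS suppM hsupp0 hsuppAdd fracLap hUCP Ψ p hp hprop u hu hsol hgeom
end

section
/- (Alessandrini identity) Let Ω ⊂ ℝ^n be bounded open, s ∈ (0,1), and Ψ_1, Ψ_2 ∈ B_0(H^s,H^{-s}) with well-posed direct problems for Ψ_1, Ψ_2, Ψ_1*, Ψ_2*. Then for all f, g ∈ H^s(ℝ^n): ⟨(Λ_{Ψ_1} − Λ_{Ψ_2})[f], [g]⟩ = ⟨(Ψ_1 − Ψ_2) P_{Ψ_1} f, P_{Ψ_2*} g⟩. -/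
/-!
Test the equation of `P_{Ψ₁} f` against `P_{Ψ₂*} g − g`, the equation of `P_{Ψ₂} f` against
`P_{Ψ₂*} g − g`, and the adjoint equation of `P_{Ψ₂*} g` against `P_{Ψ₁} f − P_{Ψ₂} f`: all three
test functions lie in `H̃ˢ(Ω)`. This replaces `g` by `P_{Ψ₂*} g` and `P_{Ψ₂} f` by `P_{Ψ₁} f`,
after which the two energy forms differ only in their potential terms.
-/

section Bilinear

variable {R M N : Type*} [CommRing R] [AddCommGroup M] [Module R M] [AddCommGroup N] [Module R N]

theorem LinearMap.apply_sub_eq_of_sub_mem {B : M →ₗ[R] N →ₗ[R] R} {W : Submodule R N} {u : M}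
    (hu : ∀ v ∈ W, B u v = 0) {v v' : N} (hv : v - v' ∈ W) : B u v = B u v' := by
  simpa [sub_eq_zero] using hu _ hv

theorem LinearMap.alessandrini_identity (B₁ B₂ : M →ₗ[R] M →ₗ[R] R) (W : Submodule R M)
    {u₁ u₂ w g : M} (h₁ : ∀ v ∈ W, B₁ u₁ v = 0) (h₂ : ∀ v ∈ W, B₂ u₂ v = 0)
    (hw : ∀ v ∈ W, B₂ v w = 0) (hu : u₁ - u₂ ∈ W) (hg : w - g ∈ W) :
    B₁ u₁ g - B₂ u₂ g = (B₁ - B₂) u₁ w := by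
  have hu' : B₂ u₁ w = B₂ u₂ w := by simpa [sub_eq_zero] using hw _ hu
  rw [← LinearMap.apply_sub_eq_of_sub_mem h₁ hg, ← LinearMap.apply_sub_eq_of_sub_mem h₂ hg]
  simp [hu']

end Bilinear

section EnergyForm

variable {Hs L2 Hms : Type*} [AddCommGroup Hs] [Module ℝ Hs]
  [NormedAddCommGroup L2] [InnerProductSpace ℝ L2] [AddCommGroup Hms] [Module ℝ Hms]

/-- The form `B_Ψ(u, v) = ⟨Λu, Λv⟩ + ⟨Ψu, v⟩`, with `Λ` playing `(−Δ)^{s/2}`. -/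
noncomputable def energyForm (Λ : Hs →ₗ[ℝ] L2) (pair : Hms →ₗ[ℝ] Hs →ₗ[ℝ] ℝ) (Ψ : Hs →ₗ[ℝ] Hms) :
    Hs →ₗ[ℝ] Hs →ₗ[ℝ] ℝ :=
  (innerₗ L2).compl₁₂ Λ Λ + pair ∘ₗ Ψ

variable (Λ : Hs →ₗ[ℝ] L2) (pair : Hms →ₗ[ℝ] Hs →ₗ[ℝ] ℝ)

theorem energyForm_apply (Ψ : Hs →ₗ[ℝ] Hms) (u v : Hs) :
    energyForm Λ pair Ψ u v = inner ℝ (Λ u) (Λ v) + pair (Ψ u) v :=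
  rfl

theorem energyForm_sub_energyForm_apply (Ψ₁ Ψ₂ : Hs →ₗ[ℝ] Hms) (u v : Hs) :
    (energyForm Λ pair Ψ₁ - energyForm Λ pair Ψ₂) u v = pair ((Ψ₁ - Ψ₂) u) v := by
  simp [energyForm_apply]

theorem energyForm_apply_comm_of_adjoint {Ψ Ψs : Hs →ₗ[ℝ] Hms}
    (hadj : ∀ u v : Hs, pair (Ψs u) v = pair (Ψ v) u) (u v : Hs) :
    energyForm Λ pair Ψ u v = energyForm Λ pair Ψs v u := by
  rw [energyForm_apply, energyForm_apply, hadj, real_inner_comm]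

end EnergyForm

theorem stmt_9_general
    {Hs L2 Hms : Type*}
    [NormedAddCommGroup Hs] [NormedSpace ℝ Hs]
    [NormedAddCommGroup L2] [InnerProductSpace ℝ L2]
    [NormedAddCommGroup Hms] [NormedSpace ℝ Hms]
    -- Λ models (−Δ)^{s/2} : Hˢ → L²; pair the H⁻ˢ–Hˢ duality pairing
    (Λ : Hs →ₗ[ℝ] L2)
    (pair : Hms →ₗ[ℝ] Hs →ₗ[ℝ] ℝ)
    -- H̃ˢ(Ω)
    (tildeΩ : Submodule ℝ Hs)
    (Ψ₁ Ψ₂ Ψ₂s : Hs →L[ℝ] Hms)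
    (hadj₂ : ∀ u v : Hs, pair (Ψ₂s u) v = pair (Ψ₂ v) u)
    -- Poisson operators: P f − f ∈ H̃ˢ(Ω) and B_Ψ(P f, v) = 0 for all v ∈ H̃ˢ(Ω)
    (P₁ P₂ P₂s : Hs → Hs)
    (hP₁ : ∀ f : Hs, P₁ f - f ∈ tildeΩ)
    (hP₂ : ∀ f : Hs, P₂ f - f ∈ tildeΩ)
    (hP₂s : ∀ f : Hs, P₂s f - f ∈ tildeΩ)
    (hsol₁ : ∀ f : Hs, ∀ v ∈ tildeΩ,
      (inner ℝ (Λ (P₁ f)) (Λ v) : ℝ) + pair (Ψ₁ (P₁ f)) v = 0)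
    (hsol₂ : ∀ f : Hs, ∀ v ∈ tildeΩ,
      (inner ℝ (Λ (P₂ f)) (Λ v) : ℝ) + pair (Ψ₂ (P₂ f)) v = 0)
    (hsol₂s : ∀ f : Hs, ∀ v ∈ tildeΩ,
      (inner ℝ (Λ (P₂s f)) (Λ v) : ℝ) + pair (Ψ₂s (P₂s f)) v = 0) :
    ∀ f g : Hs,
      ((inner ℝ (Λ (P₁ f)) (Λ g) : ℝ) + pair (Ψ₁ (P₁ f)) g)
          - ((inner ℝ (Λ (P₂ f)) (Λ g) : ℝ) + pair (Ψ₂ (P₂ f)) g)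
        = pair ((Ψ₁ - Ψ₂) (P₁ f)) (P₂s g) := by
  intro f g
  have hadj_sol : ∀ v ∈ tildeΩ, energyForm Λ pair Ψ₂ v (P₂s g) = 0 := fun v hv => by
    rw [energyForm_apply_comm_of_adjoint Λ pair (Ψs := Ψ₂s) hadj₂]
    exact hsol₂s g v hv
  have hP : P₁ f - P₂ f ∈ tildeΩ := by simpa using tildeΩ.sub_mem (hP₁ f) (hP₂ f)
  have key := LinearMap.alessandrini_identity (energyForm Λ pair Ψ₁) (energyForm Λ pair Ψ₂)
    tildeΩ (hsol₁ f) (hsol₂ f) hadj_sol hP (hP₂s g)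
  rwa [energyForm_sub_energyForm_apply] at key

/-- Alessandrini identity:
`⟨(Λ_{Ψ₁} − Λ_{Ψ₂})[f], [g]⟩ = ⟨(Ψ₁ − Ψ₂) P_{Ψ₁} f, P_{Ψ₂*} g⟩`. -/
theorem stmt_9 (n : ℕ) (s : ℝ) (hs : s ∈ Set.Ioo (0:ℝ) 1)
    {Hs L2 Hms : Type*}
    [NormedAddCommGroup Hs] [NormedSpace ℝ Hs]
    [NormedAddCommGroup L2] [InnerProductSpace ℝ L2]
    [NormedAddCommGroup Hms] [NormedSpace ℝ Hms]
    (Ω : Set (EuclideanSpace ℝ (Fin n))) (hΩo : IsOpen Ω) (hΩb : Bornology.IsBounded Ω)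
    -- Λ models (−Δ)^{s/2} : Hˢ → L²; pair the H⁻ˢ–Hˢ duality pairing
    (Λ : Hs →ₗ[ℝ] L2)
    (pair : Hms →ₗ[ℝ] Hs →ₗ[ℝ] ℝ)
    -- H̃ˢ(Ω)
    (tildeΩ : Submodule ℝ Hs)
    (Ψ₁ Ψ₂ Ψ₁s Ψ₂s : Hs →L[ℝ] Hms)
    (hadj₁ : ∀ u v : Hs, pair (Ψ₁s u) v = pair (Ψ₁ v) u)
    (hadj₂ : ∀ u v : Hs, pair (Ψ₂s u) v = pair (Ψ₂ v) u)
    -- Poisson operators: P f − f ∈ H̃ˢ(Ω) and B_Ψ(P f, v) = 0 for all v ∈ H̃ˢ(Ω)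
    (P₁ P₂ P₁s P₂s : Hs → Hs)
    (hP₁ : ∀ f : Hs, P₁ f - f ∈ tildeΩ)
    (hP₂ : ∀ f : Hs, P₂ f - f ∈ tildeΩ)
    (hP₁s : ∀ f : Hs, P₁s f - f ∈ tildeΩ)
    (hP₂s : ∀ f : Hs, P₂s f - f ∈ tildeΩ)
    (hsol₁ : ∀ f : Hs, ∀ v ∈ tildeΩ,
      (inner ℝ (Λ (P₁ f)) (Λ v) : ℝ) + pair (Ψ₁ (P₁ f)) v = 0)
    (hsol₂ : ∀ f : Hs, ∀ v ∈ tildeΩ,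
      (inner ℝ (Λ (P₂ f)) (Λ v) : ℝ) + pair (Ψ₂ (P₂ f)) v = 0)
    (hsol₁s : ∀ f : Hs, ∀ v ∈ tildeΩ,
      (inner ℝ (Λ (P₁s f)) (Λ v) : ℝ) + pair (Ψ₁s (P₁s f)) v = 0)
    (hsol₂s : ∀ f : Hs, ∀ v ∈ tildeΩ,
      (inner ℝ (Λ (P₂s f)) (Λ v) : ℝ) + pair (Ψ₂s (P₂s f)) v = 0) :
    ∀ f g : Hs,
      ((inner ℝ (Λ (P₁ f)) (Λ g) : ℝ) + pair (Ψ₁ (P₁ f)) g)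
          - ((inner ℝ (Λ (P₂ f)) (Λ g) : ℝ) + pair (Ψ₂ (P₂ f)) g)
        = pair ((Ψ₁ - Ψ₂) (P₁ f)) (P₂s g) :=
  stmt_9_general Λ pair tildeΩ Ψ₁ Ψ₂ Ψ₂s hadj₂ P₁ P₂ P₂s hP₁ hP₂ hP₂s hsol₁ hsol₂ hsol₂s
end

section
/- Let Ω ⊂ ℝ^n be bounded open, s ∈ (0,1), and Ψ ∈ B_0(H^s,H^{-s}) with well-posed direct problems for Ψ and Ψ*. Then the DN maps satisfy (Λ_Ψ)* = Λ_{Ψ*}, i.e. ⟨Λ_{Ψ*}[f],[g]⟩ = ⟨Λ_Ψ[g],[f]⟩ for all f, g ∈ H^s(ℝ^n). -/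
/-!
Both sides are values of the form `B_Ψ(u, v) = ⟨Λu, Λv⟩ + ⟨Ψu, v⟩`: the left one is
`B_{Ψ*}(P_{Ψ*} f, g)` and the right one `B_Ψ(P_Ψ g, f)`. Since `P_{Ψ*} f` solves the adjoint
problem, `B_{Ψ*}(P_{Ψ*} f, ·)` vanishes on `H̃ˢ(Ω)` and so only sees the class of its second
argument; replace `g` by `P_Ψ g ∈ [g]`. Then `B_{Ψ*}(u, v) = B_Ψ(v, u)`, and the same argument for
`B_Ψ(P_Ψ g, ·)` replaces `P_{Ψ*} f` by `f`.
-/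

section

variable {R M : Type*} [CommRing R] [AddCommGroup M] [Module R M]

theorem LinearMap.apply_apply_eq_of_sub_mem {B : M →ₗ[R] M →ₗ[R] R} {V : Submodule R M}
    {u x y : M} (hu : ∀ v ∈ V, B u v = 0) (hxy : x - y ∈ V) : B u x = B u y := by
  rw [← sub_eq_zero, ← map_sub]
  exact hu _ hxy

end

section

variable {Hs L2 Hms : Type*} [AddCommGroup Hs] [Module ℝ Hs]
  [NormedAddCommGroup L2] [InnerProductSpace ℝ L2] [AddCommGroup Hms] [Module ℝ Hms]

/-- The form `B_Ψ`, with `Λ` in the role of `(-Δ)^{s/2}`. -/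
noncomputable def perturbedDirichletForm (Λ : Hs →ₗ[ℝ] L2) (pair : Hms →ₗ[ℝ] Hs →ₗ[ℝ] ℝ)
    (Ψ : Hs →ₗ[ℝ] Hms) : Hs →ₗ[ℝ] Hs →ₗ[ℝ] ℝ :=
  (innerₗ L2).compl₁₂ Λ Λ + pair ∘ₗ Ψ

@[simp]
theorem perturbedDirichletForm_apply (Λ : Hs →ₗ[ℝ] L2) (pair : Hms →ₗ[ℝ] Hs →ₗ[ℝ] ℝ)
    (Ψ : Hs →ₗ[ℝ] Hms) (u v : Hs) :
    perturbedDirichletForm Λ pair Ψ u v = inner ℝ (Λ u) (Λ v) + pair (Ψ u) v :=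
  rfl

theorem perturbedDirichletForm_apply_of_adjoint (Λ : Hs →ₗ[ℝ] L2)
    {pair : Hms →ₗ[ℝ] Hs →ₗ[ℝ] ℝ} {Ψ Ψstar : Hs →ₗ[ℝ] Hms}
    (hadj : ∀ u v : Hs, pair (Ψstar u) v = pair (Ψ v) u) (u v : Hs) :
    perturbedDirichletForm Λ pair Ψstar u v = perturbedDirichletForm Λ pair Ψ v u := by
  simp only [perturbedDirichletForm_apply, hadj, real_inner_comm]

end

theorem stmt_10_general
    {Hs L2 Hms : Type*}
    [NormedAddCommGroup Hs] [NormedSpace ℝ Hs]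
    [NormedAddCommGroup L2] [InnerProductSpace ℝ L2]
    [NormedAddCommGroup Hms] [NormedSpace ℝ Hms]
    (Λ : Hs →ₗ[ℝ] L2)
    (pair : Hms →ₗ[ℝ] Hs →ₗ[ℝ] ℝ)
    (tildeΩ : Submodule ℝ Hs)
    (Ψ Ψstar : Hs →L[ℝ] Hms)
    (hadj : ∀ u v : Hs, pair (Ψstar u) v = pair (Ψ v) u)
    (P Pstar : Hs → Hs)
    (hP : ∀ f : Hs, P f - f ∈ tildeΩ)
    (hPstar : ∀ f : Hs, Pstar f - f ∈ tildeΩ)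
    (hsol : ∀ f : Hs, ∀ v ∈ tildeΩ,
      (inner ℝ (Λ (P f)) (Λ v) : ℝ) + pair (Ψ (P f)) v = 0)
    (hsolstar : ∀ f : Hs, ∀ v ∈ tildeΩ,
      (inner ℝ (Λ (Pstar f)) (Λ v) : ℝ) + pair (Ψstar (Pstar f)) v = 0) :
    ∀ f g : Hs,
      (inner ℝ (Λ (Pstar f)) (Λ g) : ℝ) + pair (Ψstar (Pstar f)) g
        = (inner ℝ (Λ (P g)) (Λ f) : ℝ) + pair (Ψ (P g)) f := by
  intro f g
  set B := perturbedDirichletForm Λ pair (Ψ : Hs →ₗ[ℝ] Hms)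
  set Bstar := perturbedDirichletForm Λ pair (Ψstar : Hs →ₗ[ℝ] Hms)
  calc Bstar (Pstar f) g = Bstar (Pstar f) (P g) :=
        (LinearMap.apply_apply_eq_of_sub_mem (hsolstar f) (hP g)).symm
    _ = B (P g) (Pstar f) := perturbedDirichletForm_apply_of_adjoint Λ hadj _ _
    _ = B (P g) f := LinearMap.apply_apply_eq_of_sub_mem (hsol g) (hPstar f)

/-- `(Λ_Ψ)* = Λ_{Ψ*}`, i.e. `⟨Λ_{Ψ*}[f],[g]⟩ = ⟨Λ_Ψ[g],[f]⟩` for all `f, g ∈ Hˢ`. -/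
theorem stmt_10 (n : ℕ) (s : ℝ) (hs : s ∈ Set.Ioo (0:ℝ) 1)
    {Hs L2 Hms : Type*}
    [NormedAddCommGroup Hs] [NormedSpace ℝ Hs]
    [NormedAddCommGroup L2] [InnerProductSpace ℝ L2]
    [NormedAddCommGroup Hms] [NormedSpace ℝ Hms]
    (Ω : Set (EuclideanSpace ℝ (Fin n))) (hΩo : IsOpen Ω) (hΩb : Bornology.IsBounded Ω)
    (Λ : Hs →ₗ[ℝ] L2)
    (pair : Hms →ₗ[ℝ] Hs →ₗ[ℝ] ℝ)
    (tildeΩ : Submodule ℝ Hs)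
    (Ψ Ψstar : Hs →L[ℝ] Hms)
    (hadj : ∀ u v : Hs, pair (Ψstar u) v = pair (Ψ v) u)
    (P Pstar : Hs → Hs)
    (hP : ∀ f : Hs, P f - f ∈ tildeΩ)
    (hPstar : ∀ f : Hs, Pstar f - f ∈ tildeΩ)
    (hsol : ∀ f : Hs, ∀ v ∈ tildeΩ,
      (inner ℝ (Λ (P f)) (Λ v) : ℝ) + pair (Ψ (P f)) v = 0)
    (hsolstar : ∀ f : Hs, ∀ v ∈ tildeΩ,
      (inner ℝ (Λ (Pstar f)) (Λ v) : ℝ) + pair (Ψstar (Pstar f)) v = 0) :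
    ∀ f g : Hs,
      (inner ℝ (Λ (Pstar f)) (Λ g) : ℝ) + pair (Ψstar (Pstar f)) g
        = (inner ℝ (Λ (P g)) (Λ f) : ℝ) + pair (Ψ (P g)) f :=
  stmt_10_general Λ pair tildeΩ Ψ Ψstar hadj P Pstar hP hPstar hsol hsolstar
end
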